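/- arXiv:1602.07143 — 4 statements merged into one kernel-verified Lean document; each statement's English description precedes it below -/
import Mathlib

section
/- Semi-discrete energy estimate for the reparametrized curve shortening flow: let α ∈ (0,1] and suppose X̂_h ∈ H^{1,2}((0,T), S_h²) solves, for all φ_h ∈ S_h² and t ∈ (0,T), ∫₀^{2π} (α X̂_{ht}·φ_h + (1−α)(X̂_{ht}·ν_h)(ν_h·φ_h)) |X̂_{hθ}|² dθ + ∫₀^{2π} X̂_{hθ}·φ_{hθ} dθ = 0. Then (1/2)∫₀^{2π}|X̂_{hθ}(·,T)|² dθ + ∫₀^T∫₀^{2π}(α|X̂_{ht}|² + (1−α)|X̂_{ht}·ν_h|²)|X̂_{hθ}|² dθ dt = (1/2)∫₀^{2π}|X̂_{hθ}(·,0)|² dθ. -/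
/-!
Every curve in `S_h` is affine on each grid cell, so the Dirichlet energy
`E(t) = ½∫|X̂_{hθ}(t)|²` is a finite sum of squared cell slopes of `X̂_h`. Hence `E` is
differentiable in `t` with derivative `∫ X̂_{hθ} · X̂_{htθ}`. Testing the weak formulation with
`φ_h = X̂_{ht}` identifies this derivative with minus the dissipation, which is nonnegative
because `0 < α ≤ 1`; the fundamental theorem of calculus (with integrability of the dissipation
coming from its sign) integrates the identity over `[0, T]`.
-/
open intervalIntegral

/-- The space `S_h` of continuous, 2π-periodic functions on ℝ that are affine on each
segment `[2πj/N, 2π(j+1)/N]` of the uniform grid with `N` nodes. -/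
def Sh (N : ℕ) : Set (ℝ → ℝ) :=
  {f | Continuous f ∧ (∀ s, f (s + 2 * Real.pi) = f s) ∧
    ∀ j : Fin N, ∃ a b : ℝ, ∀ s ∈ Set.Icc (2 * Real.pi * (j.val : ℝ) / N)
      (2 * Real.pi * ((j.val : ℝ) + 1) / N), f s = a * s + b}

open Set Finset MeasureTheory

theorem intervalIntegral.integral_eq_sum_of_eqOn_uIoo {E : Type*} [NormedAddCommGroup E]
    [NormedSpace ℝ E] [CompleteSpace E] {a : ℕ → ℝ} {n : ℕ} {f : ℝ → E} {c : ℕ → E}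
    (h : ∀ k < n, EqOn f (fun _ => c k) (uIoo (a k) (a (k + 1)))) :
    ∫ x in a 0..a n, f x = ∑ k ∈ range n, (a (k + 1) - a k) • c k := by
  have hint : ∀ k < n, IntervalIntegrable f volume (a k) (a (k + 1)) := fun k hk =>
    (intervalIntegrable_congr_uIoo (h k hk)).2 intervalIntegrable_const
  rw [← sum_integral_adjacent_intervals hint]
  refine Finset.sum_congr rfl fun k hk => ?_
  rw [integral_congr_uIoo (h k (Finset.mem_range.1 hk)), integral_const]

theorem deriv_eq_slope_of_eqOn_affine {f : ℝ → ℝ} {p q a b θ : ℝ}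
    (hf : ∀ s ∈ Icc p q, f s = a * s + b) (hθ : θ ∈ Ioo p q) :
    deriv f θ = slope f p q := by
  have hpq : p < q := hθ.1.trans hθ.2
  have hloc : f =ᶠ[nhds θ] fun s => a * s + b :=
    Filter.eventually_of_mem (Ioo_mem_nhds hθ.1 hθ.2) fun s hs => hf s (Ioo_subset_Icc_self hs)
  rw [hloc.deriv_eq, slope_def_field, hf p (left_mem_Icc.2 hpq.le), hf q (right_mem_Icc.2 hpq.le),
    deriv_add_const, deriv_const_mul_field', deriv_id'']
  field_simp [sub_ne_zero.2 hpq.ne']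
  ring

noncomputable def gridNode (N : ℕ) (x : ℝ) : ℝ := 2 * Real.pi * x / N

section Grid

variable {N : ℕ}

theorem Sh.deriv_eq_slope {f : ℝ → ℝ} (hf : f ∈ Sh N) (j : Fin N) {θ : ℝ}
    (hθ : θ ∈ Ioo (gridNode N j) (gridNode N (j + 1))) :
    deriv f θ = slope f (gridNode N j) (gridNode N (j + 1)) := by
  obtain ⟨a, b, hab⟩ := hf.2.2 j
  exact deriv_eq_slope_of_eqOn_affine hab hθ

theorem gridNode_lt_gridNode_add_one (hN : 0 < N) (x : ℝ) : gridNode N x < gridNode N (x + 1) := by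
  unfold gridNode
  gcongr
  linarith

theorem integral_eq_sum_of_eqOn_cells (hN : 0 < N) {f : ℝ → ℝ} {c : Fin N → ℝ}
    (h : ∀ j : Fin N, EqOn f (fun _ => c j) (Ioo (gridNode N j) (gridNode N (j + 1)))) :
    ∫ θ in (0 : ℝ)..(2 * Real.pi), f θ
      = ∑ j : Fin N, (gridNode N (j + 1) - gridNode N j) * c j := by
  have h0 : gridNode N (0 : ℕ) = 0 := by simp [gridNode]
  have hN' : gridNode N (N : ℕ) = 2 * Real.pi := by
    simp [gridNode, (Nat.cast_pos.2 hN).ne']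
  have := integral_eq_sum_of_eqOn_uIoo (a := fun k : ℕ => gridNode N k) (n := N) (f := f)
    (c := fun k => if hk : k < N then c ⟨k, hk⟩ else 0) fun k hk => by
      simpa [hk, uIoo_of_le (gridNode_lt_gridNode_add_one hN k).le] using h ⟨k, hk⟩
  rw [h0, hN', ← Fin.sum_univ_eq_sum_range] at this
  simpa using this

theorem Sh.integral_sum_deriv_mul_deriv {ι : Type*} [Fintype ι] (hN : 0 < N)
    {f g : ι → ℝ → ℝ} (hf : ∀ i, f i ∈ Sh N) (hg : ∀ i, g i ∈ Sh N) :
    ∫ θ in (0 : ℝ)..(2 * Real.pi), ∑ i, deriv (f i) θ * deriv (g i) θ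
      = ∑ j : Fin N, (gridNode N (j + 1) - gridNode N j) *
          ∑ i, slope (f i) (gridNode N j) (gridNode N (j + 1)) *
            slope (g i) (gridNode N j) (gridNode N (j + 1)) :=
  integral_eq_sum_of_eqOn_cells hN fun j _ hθ => Finset.sum_congr rfl fun i _ => by
    rw [Sh.deriv_eq_slope (hf i) j hθ, Sh.deriv_eq_slope (hg i) j hθ]

theorem Sh.hasDerivAt_half_integral_sum_deriv_sq {ι : Type*} [Fintype ι] (hN : 0 < N)
    {X : ℝ → ℝ → ι → ℝ} {t : ℝ} (hX : ∀ s i, (fun θ => X s θ i) ∈ Sh N)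
    (hXt : ∀ θ i, DifferentiableAt ℝ (fun s => X s θ i) t)
    (hXtSh : ∀ i, (fun θ => deriv (fun s => X s θ i) t) ∈ Sh N) :
    HasDerivAt (fun s => 1 / 2 * ∫ θ in (0 : ℝ)..(2 * Real.pi), ∑ i, deriv (fun u => X s u i) θ ^ 2)
      (∫ θ in (0 : ℝ)..(2 * Real.pi),
        ∑ i, deriv (fun u => X t u i) θ * deriv (fun u => deriv (fun s => X s u i) t) θ) t := by
  simp only [sq, Sh.integral_sum_deriv_mul_deriv hN (hX _) (hX _),
    Sh.integral_sum_deriv_mul_deriv hN (hX t) hXtSh]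
  have hslope : ∀ p q i, HasDerivAt (fun s => slope (fun u => X s u i) p q)
      (slope (fun u => deriv (fun s => X s u i) t) p q) t := fun p q i => by
    simp only [slope_def_field]
    exact ((hXt q i).hasDerivAt.sub (hXt p i).hasDerivAt).div_const _
  have hsum := HasDerivAt.fun_sum (u := Finset.univ) fun (j : Fin N) _ =>
    (HasDerivAt.fun_sum (u := Finset.univ) fun i _ =>
      (hslope (gridNode N j) (gridNode N (j + 1)) i).fun_mul
        (hslope (gridNode N j) (gridNode N (j + 1)) i)).const_mul
      (gridNode N (j + 1) - gridNode N j)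
  refine (hsum.const_mul (1 / 2 : ℝ)).congr_deriv ?_
  simp only [Finset.mul_sum]
  exact Finset.sum_congr rfl fun j _ => Finset.sum_congr rfl fun i _ => by ring

end Grid

theorem add_integral_eq_of_hasDerivAt_neg_of_nonneg {E D : ℝ → ℝ} {a b : ℝ} (hab : a ≤ b)
    (hE : ContinuousOn E (Icc a b)) (hED : ∀ t ∈ Ioo a b, HasDerivAt E (-D t) t)
    (hD : ∀ t ∈ Ioo a b, 0 ≤ D t) :
    E b + ∫ t in a..b, D t = E a := by
  have hED' : ∀ t ∈ Ioo a b, HasDerivAt (fun s => -E s) (D t) t := fun t ht =>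
    (hED t ht).fun_neg.congr_deriv (neg_neg _)
  have hint : IntervalIntegrable D volume a b := by
    refine intervalIntegrable_deriv_of_nonneg (g := fun s => -E s) ?_ ?_ ?_ <;>
      simp only [uIcc_of_le hab, min_eq_left hab, max_eq_right hab]
    exacts [hE.neg, hED', hD]
  rw [integral_eq_sub_of_hasDerivAt_of_le (f := fun s => -E s) hab hE.neg hED' hint]
  ring

theorem stmt9_general (N : ℕ) (hN : 0 < N) (α T : ℝ) (hα : α ∈ Set.Ioc (0 : ℝ) 1) (hT : 0 < T)
    (X νh : ℝ → ℝ → Fin 2 → ℝ)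
    (hXSh : ∀ t β, (fun θ => X t θ β) ∈ Sh N)
    (hXt : ∀ θ β, Differentiable ℝ (fun t => X t θ β))
    (hXtSh : ∀ t β, (fun θ => deriv (fun s => X s θ β) t) ∈ Sh N)
    (hweak : ∀ t ∈ Set.Ioo (0 : ℝ) T, ∀ φ : ℝ → Fin 2 → ℝ,
      (∀ β, (fun θ => φ θ β) ∈ Sh N) →
      (∫ θ in (0 : ℝ)..(2 * Real.pi),
        (α * ∑ β, deriv (fun s => X s θ β) t * φ θ β
          + (1 - α) * (∑ β, deriv (fun s => X s θ β) t * νh t θ β)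
              * (∑ β, νh t θ β * φ θ β))
        * (∑ β, (deriv (fun u => X t u β) θ) ^ 2))
      + (∫ θ in (0 : ℝ)..(2 * Real.pi),
          ∑ β, deriv (fun u => X t u β) θ * deriv (fun u => φ u β) θ) = 0) :
    (1 / 2) * (∫ θ in (0 : ℝ)..(2 * Real.pi), ∑ β, (deriv (fun u => X T u β) θ) ^ 2)
      + (∫ t in (0 : ℝ)..T, ∫ θ in (0 : ℝ)..(2 * Real.pi),
          (α * ∑ β, (deriv (fun s => X s θ β) t) ^ 2
            + (1 - α) * (∑ β, deriv (fun s => X s θ β) t * νh t θ β) ^ 2)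
          * (∑ β, (deriv (fun u => X t u β) θ) ^ 2))
      = (1 / 2) * (∫ θ in (0 : ℝ)..(2 * Real.pi), ∑ β, (deriv (fun u => X 0 u β) θ) ^ 2) := by
  have hE : ∀ t, HasDerivAt
      (fun s => 1 / 2 * ∫ θ in (0 : ℝ)..(2 * Real.pi), ∑ β, deriv (fun u => X s u β) θ ^ 2)
      (∫ θ in (0 : ℝ)..(2 * Real.pi), ∑ β, deriv (fun u => X t u β) θ *
        deriv (fun u => deriv (fun s => X s u β) t) θ) t := fun t =>
    Sh.hasDerivAt_half_integral_sum_deriv_sq hN hXSh (fun θ β => hXt θ β t) (hXtSh t)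
  refine add_integral_eq_of_hasDerivAt_neg_of_nonneg hT.le
    (fun t _ => (hE t).continuousAt.continuousWithinAt) (fun t ht => ?_) (fun t _ => ?_)
  · convert hE t using 1
    rw [neg_eq_iff_eq_neg, ← eq_neg_of_add_eq_zero_left (hweak t ht _ (hXtSh t))]
    refine intervalIntegral.integral_congr fun θ _ => ?_
    simp only [← sq, mul_comm (νh t θ _)]
    ring
  · have hα₀ : 0 ≤ α := hα.1.le
    have hα₁ : 0 ≤ 1 - α := sub_nonneg.2 hα.2
    exact integral_nonneg (by positivity) fun θ _ => by positivity

/-- Energy identity for the semi-discrete reparametrized curve shortening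
flow: if `X̂_h : [0,T] → S_h²` solves the semi-discrete weak formulation, then
(1/2)∫|X̂_{hθ}(T)|² + ∫₀^T∫ (α|X̂_{ht}|² + (1−α)|X̂_{ht}·ν_h|²)|X̂_{hθ}|²
  = (1/2)∫|X̂_{hθ}(0)|². -/
theorem stmt9 (N : ℕ) (hN : 0 < N) (α T : ℝ) (hα : α ∈ Set.Ioc (0 : ℝ) 1) (hT : 0 < T)
    (X νh : ℝ → ℝ → Fin 2 → ℝ)
    (hXSh : ∀ t β, (fun θ => X t θ β) ∈ Sh N)
    (hXt : ∀ θ β, Differentiable ℝ (fun t => X t θ β))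
    (hXtSh : ∀ t β, (fun θ => deriv (fun s => X s θ β) t) ∈ Sh N)
    (hνunit : ∀ t θ, ∑ β, νh t θ β ^ 2 = 1)
    (hνconst : ∀ t, ∀ j : Fin N, ∀ θ ∈ Set.Ico (2 * Real.pi * (j.val : ℝ) / N)
      (2 * Real.pi * ((j.val : ℝ) + 1) / N), νh t θ = νh t (2 * Real.pi * (j.val : ℝ) / N))
    (hνorth : ∀ t, ∀ j : Fin N,
      ∑ β, νh t (2 * Real.pi * (j.val : ℝ) / N) β *
        (X t (2 * Real.pi * ((j.val : ℝ) + 1) / N) β - X t (2 * Real.pi * (j.val : ℝ) / N) β) = 0)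
    (hweak : ∀ t ∈ Set.Ioo (0 : ℝ) T, ∀ φ : ℝ → Fin 2 → ℝ,
      (∀ β, (fun θ => φ θ β) ∈ Sh N) →
      (∫ θ in (0 : ℝ)..(2 * Real.pi),
        (α * ∑ β, deriv (fun s => X s θ β) t * φ θ β
          + (1 - α) * (∑ β, deriv (fun s => X s θ β) t * νh t θ β)
              * (∑ β, νh t θ β * φ θ β))
        * (∑ β, (deriv (fun u => X t u β) θ) ^ 2))
      + (∫ θ in (0 : ℝ)..(2 * Real.pi),
          ∑ β, deriv (fun u => X t u β) θ * deriv (fun u => φ u β) θ) = 0) :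
    (1 / 2) * (∫ θ in (0 : ℝ)..(2 * Real.pi), ∑ β, (deriv (fun u => X T u β) θ) ^ 2)
      + (∫ t in (0 : ℝ)..T, ∫ θ in (0 : ℝ)..(2 * Real.pi),
          (α * ∑ β, (deriv (fun s => X s θ β) t) ^ 2
            + (1 - α) * (∑ β, deriv (fun s => X s θ β) t * νh t θ β) ^ 2)
          * (∑ β, (deriv (fun u => X t u β) θ) ^ 2))
      = (1 / 2) * (∫ θ in (0 : ℝ)..(2 * Real.pi), ∑ β, (deriv (fun u => X 0 u β) θ) ^ 2) :=
  stmt9_general N hN α T hα hT X νh hXSh hXt hXtSh hweak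
end

section
/- Fully discrete stability: let X̂_h^{m} ∈ S_h² for m = 0,…,M solve the semi-implicit scheme ∫₀^{2π} ((α/τ)(X̂_h^{m+1}−X̂_h^m)·φ_h + ((1−α)/τ)((X̂_h^{m+1}−X̂_h^m)·ν_h^m)(ν_h^m·φ_h)) |X̂_{hθ}^m|² dθ + ∫₀^{2π} X̂_{hθ}^{m+1}·φ_{hθ} dθ = 0 for all φ_h ∈ S_h². Then (1/2)∫₀^{2π}|X̂^M_{hθ}|²dθ + Σ_{m=0}^{M−1} ∫₀^{2π}((α/τ)|X̂^{m+1}_h−X̂^m_h|² + ((1−α)/τ)|(X̂^{m+1}_h−X̂^m_h)·ν_h^m|²)|X̂^m_{hθ}|² dθ ≤ (1/2)∫₀^{2π}|X̂^0_{hθ}|²dθ. -/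
/-!
Testing the scheme with the increment `φ = X^{m+1} - X^m` turns its first integral into the
`m`-th dissipation term, while the stiffness term `∫ X^{m+1}_θ · (X^{m+1} - X^m)_θ` dominates
`½∫|X^{m+1}_θ|² - ½∫|X^m_θ|²` because `a · (a - b) ≥ ½(|a|² - |b|²)`. Summing over `m` telescopes.
Elements of `S_h` are affine between the finitely many grid nodes, so their derivatives exist
and are bounded almost everywhere; this makes every integral honest (not a junk `0`) and lets
`deriv` commute with subtraction under the integral.
-/

open intervalIntegral

open MeasureTheory Set Real

lemma half_sum_sq_sub_half_sum_sq_le {ι : Type*} (s : Finset ι) (a b : ι → ℝ) :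
    (1 / 2) * ∑ i ∈ s, a i ^ 2 - (1 / 2) * ∑ i ∈ s, b i ^ 2 ≤ ∑ i ∈ s, a i * (a i - b i) := by
  rw [Finset.mul_sum, Finset.mul_sum, ← Finset.sum_sub_distrib]
  exact Finset.sum_le_sum fun i _ => by nlinarith [sq_nonneg (a i - b i)]

lemma mul_sum_mul_self_add_mul_sum_mul_sum {ι : Type*} (s : Finset ι) (a b : ℝ) (d ν : ι → ℝ) :
    a * ∑ i ∈ s, d i * d i + b * (∑ i ∈ s, d i * ν i) * (∑ i ∈ s, ν i * d i)
      = a * ∑ i ∈ s, d i ^ 2 + b * (∑ i ∈ s, d i * ν i) ^ 2 := by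
  simp only [sq, mul_comm (ν _) (d _)]
  ring

lemma add_sum_range_le_of_le_sub_succ {d e : ℕ → ℝ} {M : ℕ}
    (h : ∀ m < M, d m ≤ e m - e (m + 1)) : e M + ∑ m ∈ Finset.range M, d m ≤ e 0 := by
  have := Finset.sum_le_sum fun m hm => h m (Finset.mem_range.mp hm)
  rw [Finset.sum_range_sub'] at this
  linarith

lemma exists_mem_Ioo_grid_of_notMem {N : ℕ} (hN : 0 < N) {θ : ℝ} (hθ : θ ∈ Icc 0 (2 * π))
    (hnode : θ ∉ range fun j : Fin (N + 1) => 2 * π * (j.val : ℝ) / N) :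
    ∃ j : Fin N, θ ∈ Ioo (2 * π * (j.val : ℝ) / N) (2 * π * ((j.val : ℝ) + 1) / N) := by
  set x := θ * N / (2 * π) with hx
  have hθx : θ = 2 * π * x / N := by rw [hx]; field_simp
  have hx0 : 0 ≤ x := by have := hθ.1; positivity
  have hxN : x ≤ N := by
    rw [hx, div_le_iff₀ two_pi_pos]; nlinarith [hθ.2]
  have hjN : ⌊x⌋₊ ≤ N := Nat.floor_le_of_le hxN
  have hjx : (⌊x⌋₊ : ℝ) < x := by
    refine (Nat.floor_le hx0).lt_of_ne fun h => hnode ⟨⟨⌊x⌋₊, Nat.lt_succ_of_le hjN⟩, ?_⟩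
    simp only [hθx, h]
  have hjN' : ⌊x⌋₊ < N := by exact_mod_cast hjx.trans_le hxN
  refine ⟨⟨⌊x⌋₊, hjN'⟩, ?_, ?_⟩ <;> rw [hθx] <;> gcongr
  exact Nat.lt_floor_add_one x

lemma ae_mem_Ioo_grid {N : ℕ} (hN : 0 < N) :
    ∀ᵐ θ ∂volume.restrict (Icc 0 (2 * π)),
      ∃ j : Fin N, θ ∈ Ioo (2 * π * (j.val : ℝ) / N) (2 * π * ((j.val : ℝ) + 1) / N) := by
  have hnodes := (countable_range fun j : Fin (N + 1) => 2 * π * (j.val : ℝ) / N).ae_notMem volume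
  filter_upwards [ae_restrict_mem measurableSet_Icc, ae_restrict_of_ae hnodes] with θ hθ hnode
  exact exists_mem_Ioo_grid_of_notMem hN hθ hnode

namespace Sh

variable {N : ℕ} {f g : ℝ → ℝ}

lemma sub (hf : f ∈ Sh N) (hg : g ∈ Sh N) : (fun s => f s - g s) ∈ Sh N := by
  obtain ⟨hfc, hfp, hfa⟩ := hf
  obtain ⟨hgc, hgp, hga⟩ := hg
  refine ⟨hfc.sub hgc, fun s => by simp [hfp s, hgp s], fun j => ?_⟩
  obtain ⟨a, b, hab⟩ := hfa j
  obtain ⟨a', b', hab'⟩ := hga j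
  exact ⟨a - a', b - b', fun s hs => by simp only [hab s hs, hab' s hs]; ring⟩

lemma exists_hasDerivAt (hf : f ∈ Sh N) (j : Fin N) :
    ∃ a : ℝ, ∀ θ ∈ Ioo (2 * π * (j.val : ℝ) / N) (2 * π * ((j.val : ℝ) + 1) / N),
      HasDerivAt f a θ := by
  obtain ⟨a, b, hab⟩ := hf.2.2 j
  refine ⟨a, fun θ hθ => ?_⟩
  have affine : HasDerivAt (fun s => a * s + b) a θ := by
    simpa using ((hasDerivAt_id θ).const_mul a).add_const b
  exact affine.congr_of_eventuallyEq <|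
    Filter.mem_of_superset (Ioo_mem_nhds hθ.1 hθ.2) fun s hs => hab s (Ioo_subset_Icc_self hs)

lemma ae_differentiableAt (hN : 0 < N) (hf : f ∈ Sh N) :
    ∀ᵐ θ ∂volume.restrict (Icc 0 (2 * π)), DifferentiableAt ℝ f θ := by
  filter_upwards [ae_mem_Ioo_grid hN] with θ ⟨j, hj⟩
  obtain ⟨a, ha⟩ := exists_hasDerivAt hf j
  exact (ha θ hj).differentiableAt

lemma exists_ae_abs_deriv_le (hN : 0 < N) (hf : f ∈ Sh N) :
    ∃ C, ∀ᵐ θ ∂volume.restrict (Icc 0 (2 * π)), |deriv f θ| ≤ C := by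
  choose a ha using exists_hasDerivAt hf
  refine ⟨∑ j, |a j|, ?_⟩
  filter_upwards [ae_mem_Ioo_grid hN] with θ ⟨j, hj⟩
  rw [(ha j θ hj).deriv]
  exact Finset.single_le_sum (fun j _ => abs_nonneg (a j)) (Finset.mem_univ j)

lemma intervalIntegrable_deriv_mul_deriv (hN : 0 < N) (hf : f ∈ Sh N) (hg : g ∈ Sh N) :
    IntervalIntegrable (fun θ => deriv f θ * deriv g θ) volume 0 (2 * π) := by
  obtain ⟨C, hC⟩ := exists_ae_abs_deriv_le hN hf
  obtain ⟨D, hD⟩ := exists_ae_abs_deriv_le hN hg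
  rw [intervalIntegrable_iff_integrableOn_Icc_of_le two_pi_pos.le]
  refine IntegrableOn.of_bound measure_Icc_lt_top
    ((measurable_deriv f).mul (measurable_deriv g)).aestronglyMeasurable (C * D) ?_
  filter_upwards [hC, hD] with θ hθC hθD
  rw [Real.norm_eq_abs, abs_mul]
  exact mul_le_mul hθC hθD (abs_nonneg _) ((abs_nonneg _).trans hθC)

lemma intervalIntegrable_sum_deriv_mul_deriv {ι : Type*} [Fintype ι] {F G : ℝ → ι → ℝ}
    (hN : 0 < N) (hF : ∀ β, (fun θ => F θ β) ∈ Sh N) (hG : ∀ β, (fun θ => G θ β) ∈ Sh N) :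
    IntervalIntegrable (fun θ => ∑ β, deriv (fun u => F u β) θ * deriv (fun u => G u β) θ)
      volume 0 (2 * π) := by
  simpa only [Finset.sum_fn] using IntervalIntegrable.sum Finset.univ fun β _ =>
    intervalIntegrable_deriv_mul_deriv hN (hF β) (hG β)

lemma intervalIntegrable_sum_sq_deriv {ι : Type*} [Fintype ι] {F : ℝ → ι → ℝ} (hN : 0 < N)
    (hF : ∀ β, (fun θ => F θ β) ∈ Sh N) :
    IntervalIntegrable (fun θ => ∑ β, (deriv (fun u => F u β) θ) ^ 2) volume 0 (2 * π) := by
  simpa only [sq] using intervalIntegrable_sum_deriv_mul_deriv hN hF hF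

end Sh

lemma half_integral_sum_sq_deriv_sub_le {N : ℕ} {ι : Type*} [Fintype ι] {F G : ℝ → ι → ℝ}
    (hN : 0 < N) (hF : ∀ β, (fun θ => F θ β) ∈ Sh N) (hG : ∀ β, (fun θ => G θ β) ∈ Sh N) :
    (1 / 2) * (∫ θ in (0 : ℝ)..(2 * π), ∑ β, (deriv (fun u => F u β) θ) ^ 2)
      - (1 / 2) * (∫ θ in (0 : ℝ)..(2 * π), ∑ β, (deriv (fun u => G u β) θ) ^ 2)
      ≤ ∫ θ in (0 : ℝ)..(2 * π), ∑ β, deriv (fun u => F u β) θ * deriv (fun u => F u β - G u β) θ := by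
  have hF2 := (Sh.intervalIntegrable_sum_sq_deriv hN hF).const_mul (1 / 2)
  have hG2 := (Sh.intervalIntegrable_sum_sq_deriv hN hG).const_mul (1 / 2)
  rw [← intervalIntegral.integral_const_mul, ← intervalIntegral.integral_const_mul,
    ← intervalIntegral.integral_sub hF2 hG2]
  refine intervalIntegral.integral_mono_ae_restrict two_pi_pos.le (hF2.sub hG2)
    (Sh.intervalIntegrable_sum_deriv_mul_deriv hN hF fun β => Sh.sub (hF β) (hG β)) ?_
  have hdiff := ae_all_iff.mpr fun β => Sh.ae_differentiableAt hN (hF β)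
  have hdiff' := ae_all_iff.mpr fun β => Sh.ae_differentiableAt hN (hG β)
  filter_upwards [hdiff, hdiff'] with θ hFθ hGθ
  have hsub : ∀ β, deriv (fun u => F u β - G u β) θ
      = deriv (fun u => F u β) θ - deriv (fun u => G u β) θ := fun β => deriv_sub (hFθ β) (hGθ β)
  simp only [hsub]
  exact half_sum_sq_sub_half_sum_sq_le _ _ _

theorem stmt10_general (N M : ℕ) (hN : 0 < N) (α τ : ℝ)
    (X νh : ℕ → ℝ → Fin 2 → ℝ)
    (hXSh : ∀ m β, (fun θ => X m θ β) ∈ Sh N)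
    (hscheme : ∀ m < M, ∀ φ : ℝ → Fin 2 → ℝ, (∀ β, (fun θ => φ θ β) ∈ Sh N) →
      (∫ θ in (0 : ℝ)..(2 * Real.pi),
        ((α / τ) * ∑ β, (X (m + 1) θ β - X m θ β) * φ θ β
          + ((1 - α) / τ) * (∑ β, (X (m + 1) θ β - X m θ β) * νh m θ β)
              * (∑ β, νh m θ β * φ θ β))
        * (∑ β, (deriv (fun u => X m u β) θ) ^ 2))
      + (∫ θ in (0 : ℝ)..(2 * Real.pi),
          ∑ β, deriv (fun u => X (m + 1) u β) θ * deriv (fun u => φ u β) θ) = 0) :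
    (1 / 2) * (∫ θ in (0 : ℝ)..(2 * Real.pi), ∑ β, (deriv (fun u => X M u β) θ) ^ 2)
      + ∑ m ∈ Finset.range M, (∫ θ in (0 : ℝ)..(2 * Real.pi),
          ((α / τ) * ∑ β, (X (m + 1) θ β - X m θ β) ^ 2
            + ((1 - α) / τ) * (∑ β, (X (m + 1) θ β - X m θ β) * νh m θ β) ^ 2)
          * (∑ β, (deriv (fun u => X m u β) θ) ^ 2))
      ≤ (1 / 2) * (∫ θ in (0 : ℝ)..(2 * Real.pi), ∑ β, (deriv (fun u => X 0 u β) θ) ^ 2) := by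
  refine add_sum_range_le_of_le_sub_succ (e := fun k =>
    (1 / 2) * ∫ θ in (0 : ℝ)..(2 * π), ∑ β, (deriv (fun u => X k u β) θ) ^ 2) fun m hm => ?_
  have hscheme_increment := hscheme m hm (fun θ β => X (m + 1) θ β - X m θ β)
    fun β => Sh.sub (hXSh (m + 1) β) (hXSh m β)
  simp only [mul_sum_mul_self_add_mul_sum_mul_sum] at hscheme_increment
  have henergy := half_integral_sum_sq_deriv_sub_le hN (hXSh (m + 1)) (hXSh m)
  linarith

/-- Unconditional stability of the fully discrete semi-implicit scheme
for the reparametrized curve shortening flow: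
(1/2)∫|X̂^M_{hθ}|² + Σ_{m<M} ∫ ((α/τ)|X̂^{m+1}−X̂^m|² + ((1−α)/τ)|(X̂^{m+1}−X̂^m)·ν^m|²)|X̂^m_{hθ}|²
  ≤ (1/2)∫|X̂^0_{hθ}|². -/
theorem stmt10 (N M : ℕ) (hN : 0 < N) (α τ : ℝ) (hα : α ∈ Set.Ioc (0 : ℝ) 1) (hτ : 0 < τ)
    (X νh : ℕ → ℝ → Fin 2 → ℝ)
    (hXSh : ∀ m β, (fun θ => X m θ β) ∈ Sh N)
    (hνunit : ∀ m θ, ∑ β, νh m θ β ^ 2 = 1)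
    (hνconst : ∀ m, ∀ j : Fin N, ∀ θ ∈ Set.Ico (2 * Real.pi * (j.val : ℝ) / N)
      (2 * Real.pi * ((j.val : ℝ) + 1) / N), νh m θ = νh m (2 * Real.pi * (j.val : ℝ) / N))
    (hνorth : ∀ m, ∀ j : Fin N,
      ∑ β, νh m (2 * Real.pi * (j.val : ℝ) / N) β *
        (X m (2 * Real.pi * ((j.val : ℝ) + 1) / N) β - X m (2 * Real.pi * (j.val : ℝ) / N) β) = 0)
    (hscheme : ∀ m < M, ∀ φ : ℝ → Fin 2 → ℝ, (∀ β, (fun θ => φ θ β) ∈ Sh N) →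
      (∫ θ in (0 : ℝ)..(2 * Real.pi),
        ((α / τ) * ∑ β, (X (m + 1) θ β - X m θ β) * φ θ β
          + ((1 - α) / τ) * (∑ β, (X (m + 1) θ β - X m θ β) * νh m θ β)
              * (∑ β, νh m θ β * φ θ β))
        * (∑ β, (deriv (fun u => X m u β) θ) ^ 2))
      + (∫ θ in (0 : ℝ)..(2 * Real.pi),
          ∑ β, deriv (fun u => X (m + 1) u β) θ * deriv (fun u => φ u β) θ) = 0) :
    (1 / 2) * (∫ θ in (0 : ℝ)..(2 * Real.pi), ∑ β, (deriv (fun u => X M u β) θ) ^ 2)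
      + ∑ m ∈ Finset.range M, (∫ θ in (0 : ℝ)..(2 * Real.pi),
          ((α / τ) * ∑ β, (X (m + 1) θ β - X m θ β) ^ 2
            + ((1 - α) / τ) * (∑ β, (X (m + 1) θ β - X m θ β) * νh m θ β) ^ 2)
          * (∑ β, (deriv (fun u => X m u β) θ) ^ 2))
      ≤ (1 / 2) * (∫ θ in (0 : ℝ)..(2 * Real.pi), ∑ β, (deriv (fun u => X 0 u β) θ) ^ 2) :=
  stmt10_general N M hN α τ X νh hXSh hscheme
end

section
/- Let G = (∇_M x̂)ᵀ ∇_M x̂ + μ⊗μ where x̂: M → ℝ^{n+1} is a smooth immersion of an n-dimensional hypersurface M ⊂ ℝ^{n+1}, ∇_M denotes the tangential gradient, and μ is the unit normal to M. Then in local coordinates, det G = det(ĝ_{jk})/det(h_{jk}), where ĝ_{jk} = ∂_j X̂ · ∂_k X̂ is the metric induced by x̂ and h_{jk} is the metric induced on M by the Euclidean ambient metric. -/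
noncomputable def pd {n : ℕ} (f : (Fin n → ℝ) → ℝ) (i : Fin n) (θ : Fin n → ℝ) : ℝ :=
  fderiv ℝ f θ (Pi.single i 1)

private lemma sum_swap4 {m : ℕ} (f : Fin m → Fin m → Fin m → Fin m → ℝ) :
    ∑ i, ∑ j, ∑ k, ∑ l, f i j k l = ∑ l, ∑ i, ∑ k, ∑ j, f i j k l :=
  calc ∑ i, ∑ j, ∑ k, ∑ l, f i j k l
      = ∑ i, ∑ j, ∑ l, ∑ k, f i j k l :=
        Finset.sum_congr rfl fun i _ => Finset.sum_congr rfl fun j _ => Finset.sum_comm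
    _ = ∑ i, ∑ l, ∑ j, ∑ k, f i j k l :=
        Finset.sum_congr rfl fun i _ => Finset.sum_comm
    _ = ∑ l, ∑ i, ∑ j, ∑ k, f i j k l := Finset.sum_comm
    _ = ∑ l, ∑ i, ∑ k, ∑ j, f i j k l :=
        Finset.sum_congr rfl fun l _ => Finset.sum_congr rfl fun i _ => Finset.sum_comm

set_option maxHeartbeats 1000000 in
/-- For the global representation
G = (∇_M x̂)ᵀ∇_M x̂ + μ⊗μ (in local coordinates,
G_{βγ} = ∂_i c_β h^{ij} ĝ_{jk} h^{kl} ∂_l c_γ + μ_β μ_γ) of the pull-back metric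
ĝ = x̂* e on a hypersurface M ⊂ ℝ^{n+1} with chart c, induced metric h and unit
normal μ, one has det G = det(ĝ_{jk}) / det(h_{jk}). -/
theorem stmt12 {n : ℕ} (c X μ : (Fin n → ℝ) → Fin (n + 1) → ℝ)
    (hc : ∀ β, ContDiff ℝ (⊤ : ℕ∞) (fun θ => c θ β)) (hX : ∀ β, ContDiff ℝ (⊤ : ℕ∞) (fun θ => X θ β))
    (h hInv g : (Fin n → ℝ) → Matrix (Fin n) (Fin n) ℝ)
    (hh : ∀ θ i j, h θ i j = ∑ β, pd (fun t => c t β) i θ * pd (fun t => c t β) j θ)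
    (hg : ∀ θ i j, g θ i j = ∑ β, pd (fun t => X t β) i θ * pd (fun t => X t β) j θ)
    (hhInv : ∀ θ, h θ * hInv θ = 1 ∧ hInv θ * h θ = 1)
    (hμunit : ∀ θ, ∑ β, μ θ β ^ 2 = 1)
    (hμorth : ∀ θ i, ∑ β, μ θ β * pd (fun t => c t β) i θ = 0)
    (G : (Fin n → ℝ) → Matrix (Fin (n + 1)) (Fin (n + 1)) ℝ)
    (hG : ∀ θ β γ, G θ β γ
        = (∑ i, ∑ j, ∑ k, ∑ l, pd (fun t => c t β) i θ * hInv θ i j * g θ j k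
            * hInv θ k l * pd (fun t => c t γ) l θ)
          + μ θ β * μ θ γ)
    (θ : Fin n → ℝ) :
    (G θ).det = (g θ).det / (h θ).det := by
  classical
  set e : Fin n ⊕ Fin 1 ≃ Fin (n + 1) := finSumFinEquiv with he
  set B : Matrix (Fin n ⊕ Fin 1) (Fin n ⊕ Fin 1) ℝ :=
    fun s t => Sum.rec (fun i => pd (fun u => c u (e s)) i θ) (fun _ => μ θ (e s)) t with hB
  set M : Matrix (Fin n ⊕ Fin 1) (Fin n ⊕ Fin 1) ℝ :=
    Matrix.fromBlocks (hInv θ * g θ * hInv θ) 0 0 1 with hM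
  have key1 : B.transpose * B = Matrix.fromBlocks (h θ) 0 0 1 := by
    ext t t'
    rw [Matrix.mul_apply]
    rw [← Equiv.sum_comp e.symm (fun s => B.transpose t s * B s t')]
    simp only [Matrix.transpose_apply]
    cases t with
    | inl i =>
      cases t' with
      | inl j =>
        simp only [hB, Matrix.transpose_apply, Matrix.fromBlocks_apply₁₁, Equiv.apply_symm_apply]
        rw [hh]
      | inr u =>
        simp only [hB, Matrix.transpose_apply, Matrix.fromBlocks_apply₁₂, Equiv.apply_symm_apply,
          Matrix.zero_apply]
        rw [← hμorth θ i]
        exact Finset.sum_congr rfl fun β _ => by ring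
    | inr u =>
      cases t' with
      | inl j =>
        simp only [hB, Matrix.transpose_apply, Matrix.fromBlocks_apply₂₁, Equiv.apply_symm_apply,
          Matrix.zero_apply]
        exact hμorth θ j
      | inr u' =>
        simp only [hB, Matrix.transpose_apply, Matrix.fromBlocks_apply₂₂, Equiv.apply_symm_apply,
          Matrix.one_apply, Subsingleton.elim u u', if_pos rfl]
        rw [← hμunit θ]
        exact Finset.sum_congr rfl fun β _ => by ring
  have key2 : G θ = (B * M * B.transpose).submatrix e.symm e.symm := by
    ext β γ
    rw [hG, Matrix.submatrix_apply, Matrix.mul_apply]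
    simp only [Matrix.mul_apply, Matrix.transpose_apply]
    simp only [hB, hM, Matrix.mul_apply, Matrix.transpose_apply, Fintype.sum_sum_type,
      Matrix.fromBlocks_apply₁₁, Matrix.fromBlocks_apply₁₂, Matrix.fromBlocks_apply₂₁,
      Matrix.fromBlocks_apply₂₂, Matrix.zero_apply, mul_zero, zero_mul, Finset.sum_const_zero,
      add_zero, zero_add, Matrix.one_apply, Finset.univ_unique, Finset.sum_singleton,
      Equiv.apply_symm_apply, Finset.sum_mul, Finset.mul_sum]
    congr 1
    · exact (sum_swap4 (fun i j k l => pd (fun t => c t β) i θ * hInv θ i j * g θ j k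
          * hInv θ k l * pd (fun t => c t γ) l θ)).trans
        (Finset.sum_congr rfl fun l _ => Finset.sum_congr rfl fun i _ =>
          Finset.sum_congr rfl fun k _ => Finset.sum_congr rfl fun j _ => by ring)
    · simp
  have hdet2 : (G θ).det = (B * M * B.transpose).det := by
    rw [key2]; exact Matrix.det_submatrix_equiv_self e.symm _
  have hBB : B.det * B.det = (h θ).det := by
    have := congrArg Matrix.det key1
    rw [Matrix.det_mul, Matrix.det_transpose, Matrix.det_fromBlocks_zero₂₁, Matrix.det_one,
      mul_one] at this
    exact this
  have hdh : (h θ).det * (hInv θ).det = 1 := by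
    have := congrArg Matrix.det (hhInv θ).1
    rwa [Matrix.det_mul, Matrix.det_one] at this
  have h0 : (h θ).det ≠ 0 := by
    intro hz; rw [hz, zero_mul] at hdh; exact one_ne_zero hdh.symm
  have hx : (hInv θ).det = (h θ).det⁻¹ := by
    field_simp
    linear_combination hdh
  have hM' : M.det = (hInv θ).det * (g θ).det * (hInv θ).det := by
    rw [hM, Matrix.det_fromBlocks_zero₂₁, Matrix.det_one, mul_one, Matrix.det_mul,
      Matrix.det_mul]
  rw [hdet2, Matrix.det_mul, Matrix.det_mul, Matrix.det_transpose, hM', hx]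
  have : B.det * ((h θ).det⁻¹ * (g θ).det * (h θ).det⁻¹) * B.det
      = B.det * B.det * ((h θ).det⁻¹ * (g θ).det * (h θ).det⁻¹) := by ring
  rw [this, hBB]
  field_simp
end

section
/- Let M ⊂ ℝ^{n+1} be a smooth hypersurface, x̂: M → Γ a diffeomorphism onto a hypersurface Γ, and f, w: Γ → ℝ differentiable. With G = (∇_M x̂)ᵀ∇_M x̂ + μ⊗μ, the tangential gradients satisfy G⁻¹ ∇_M(f∘x̂) · ∇_M(w∘x̂) = (∇_Γ f · ∇_Γ w) ∘ x̂. -/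
open Matrix

set_option maxHeartbeats 1000000

/-- Let x̂ : M → Γ be a diffeomorphism between hypersurfaces in ℝ^{n+1},
with chart c of M (inducing the metric h), parametrization X̂ = x̂∘c of Γ (inducing
the metric ĝ), unit normal μ of M, and G = (∇_M x̂)ᵀ∇_M x̂ + μ⊗μ. For differentiable
functions f, w on Γ with coordinate representations F = f∘X̂, W = w∘X̂, the tangential
gradients satisfy G⁻¹ ∇_M(f∘x̂)·∇_M(w∘x̂) = (∇_Γ f · ∇_Γ w)∘x̂, where in coordinates
∇_M(f∘x̂) = h^{ij}∂_iF ∂_j c and (∇_Γ f)∘X̂ = ĝ^{ij}∂_iF ∂_j X̂. -/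
theorem stmt14 {n : ℕ} (c X μ : (Fin n → ℝ) → Fin (n + 1) → ℝ)
    (F W : (Fin n → ℝ) → ℝ)
    (hc : ∀ β, ContDiff ℝ (⊤ : ℕ∞) (fun θ => c θ β)) (hX : ∀ β, ContDiff ℝ (⊤ : ℕ∞) (fun θ => X θ β))
    (hF : Differentiable ℝ F) (hW : Differentiable ℝ W)
    (h hInv g gInv : (Fin n → ℝ) → Matrix (Fin n) (Fin n) ℝ)
    (hh : ∀ θ i j, h θ i j = ∑ β, pd (fun t => c t β) i θ * pd (fun t => c t β) j θ)
    (hg : ∀ θ i j, g θ i j = ∑ β, pd (fun t => X t β) i θ * pd (fun t => X t β) j θ)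
    (hhInv : ∀ θ, h θ * hInv θ = 1 ∧ hInv θ * h θ = 1)
    (hgInv : ∀ θ, g θ * gInv θ = 1 ∧ gInv θ * g θ = 1)
    (hμunit : ∀ θ, ∑ β, μ θ β ^ 2 = 1)
    (hμorth : ∀ θ i, ∑ β, μ θ β * pd (fun t => c t β) i θ = 0)
    (G GInv : (Fin n → ℝ) → Matrix (Fin (n + 1)) (Fin (n + 1)) ℝ)
    (hG : ∀ θ β γ, G θ β γ
        = (∑ i, ∑ j, ∑ k, ∑ l, pd (fun t => c t β) i θ * hInv θ i j * g θ j k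
            * hInv θ k l * pd (fun t => c t γ) l θ)
          + μ θ β * μ θ γ)
    (hGInv : ∀ θ, G θ * GInv θ = 1 ∧ GInv θ * G θ = 1)
    (θ : Fin n → ℝ) :
    ∑ β, ∑ γ, GInv θ β γ
        * (∑ i, ∑ j, hInv θ i j * pd F i θ * pd (fun t => c t β) j θ)
        * (∑ i, ∑ j, hInv θ i j * pd W i θ * pd (fun t => c t γ) j θ)
      = ∑ lam, (∑ i, ∑ j, gInv θ i j * pd F i θ * pd (fun t => X t lam) j θ)
          * (∑ i, ∑ j, gInv θ i j * pd W i θ * pd (fun t => X t lam) j θ) := by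
  classical
  set Dc : Matrix (Fin n) (Fin (n + 1)) ℝ :=
    Matrix.of fun i β => pd (fun t => c t β) i θ with hDcdef
  set DX : Matrix (Fin n) (Fin (n + 1)) ℝ :=
    Matrix.of fun i β => pd (fun t => X t β) i θ with hDXdef
  set m : Fin (n + 1) → ℝ := μ θ with hmdef
  set vF : Fin n → ℝ := fun i => pd F i θ with hvFdef
  set vW : Fin n → ℝ := fun i => pd W i θ with hvWdef
  have hmat_h : h θ = Dc * Dcᵀ := by
    ext i j
    simp [Matrix.mul_apply, hh, hDcdef, mul_comm]
  have hmat_g : g θ = DX * DXᵀ := by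
    ext i j
    simp [Matrix.mul_apply, hg, hDXdef, mul_comm]
  have horth : Dc *ᵥ m = 0 := by
    funext i
    simpa [Matrix.mulVec, dotProduct, hDcdef, mul_comm] using hμorth θ i
  -- symmetry of h and g
  have hsymh : (h θ)ᵀ = h θ := by
    ext i j; simp [Matrix.transpose_apply, hh, mul_comm]
  have hsymg : (g θ)ᵀ = g θ := by
    ext i j; simp [Matrix.transpose_apply, hg, mul_comm]
  have hhInvT : h θ * (hInv θ)ᵀ = 1 := by
    have := congrArg Matrix.transpose (hhInv θ).2
    rwa [Matrix.transpose_mul, hsymh, Matrix.transpose_one] at this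
  have hgInvT : g θ * (gInv θ)ᵀ = 1 := by
    have := congrArg Matrix.transpose (hgInv θ).2
    rwa [Matrix.transpose_mul, hsymg, Matrix.transpose_one] at this
  -- G as a matrix product
  have sum3_rev : ∀ (f : Fin n → Fin n → Fin n → ℝ),
      ∑ j, ∑ k, ∑ l, f j k l = ∑ l, ∑ k, ∑ j, f j k l := by
    intro f
    calc ∑ j, ∑ k, ∑ l, f j k l
        = ∑ j, ∑ l, ∑ k, f j k l :=
          Finset.sum_congr rfl fun j _ => Finset.sum_comm
      _ = ∑ l, ∑ j, ∑ k, f j k l := Finset.sum_comm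
      _ = ∑ l, ∑ k, ∑ j, f j k l :=
          Finset.sum_congr rfl fun l _ => Finset.sum_comm
  have sum4_rev : ∀ (f : Fin n → Fin n → Fin n → Fin n → ℝ),
      ∑ i, ∑ j, ∑ k, ∑ l, f i j k l = ∑ l, ∑ k, ∑ j, ∑ i, f i j k l := by
    intro f
    calc ∑ i, ∑ j, ∑ k, ∑ l, f i j k l
        = ∑ i, ∑ l, ∑ k, ∑ j, f i j k l :=
          Finset.sum_congr rfl fun i _ => sum3_rev _
      _ = ∑ l, ∑ i, ∑ k, ∑ j, f i j k l := Finset.sum_comm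
      _ = ∑ l, ∑ k, ∑ i, ∑ j, f i j k l :=
          Finset.sum_congr rfl fun l _ => Finset.sum_comm
      _ = ∑ l, ∑ k, ∑ j, ∑ i, f i j k l :=
          Finset.sum_congr rfl fun l _ =>
            Finset.sum_congr rfl fun k _ => Finset.sum_comm
  have hGmat : G θ = Dcᵀ * hInv θ * g θ * hInv θ * Dc + Matrix.vecMulVec m m := by
    ext β γ
    rw [hG]
    simp only [Matrix.add_apply, Matrix.vecMulVec_apply, hmdef]
    congr 1
    rw [sum4_rev]
    simp only [Matrix.mul_apply, Matrix.transpose_apply, hDcdef, Matrix.of_apply,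
      Finset.sum_mul]
  set A : Matrix (Fin n) (Fin (n + 1)) ℝ := hInv θ * Dc with hAdef
  have hADcT : A * Dcᵀ = 1 := by
    rw [hAdef, Matrix.mul_assoc, ← hmat_h, (hhInv θ).2]
  have hAμ : A *ᵥ m = 0 := by
    rw [hAdef, ← Matrix.mulVec_mulVec, horth, Matrix.mulVec_zero]
  have hAAT : A * Aᵀ = (hInv θ)ᵀ := by
    rw [hAdef, Matrix.transpose_mul, Matrix.mul_assoc, ← Matrix.mul_assoc Dc,
      ← hmat_h, ← Matrix.mul_assoc, (hhInv θ).2, Matrix.one_mul]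
  have hAG : A * G θ = hInv θ * g θ * A := by
    rw [hGmat, Matrix.mul_add]
    have h1 : A * (Dcᵀ * hInv θ * g θ * hInv θ * Dc) = hInv θ * g θ * A := by
      calc A * (Dcᵀ * hInv θ * g θ * hInv θ * Dc)
          = (A * Dcᵀ) * (hInv θ * g θ * (hInv θ * Dc)) := by
            simp only [Matrix.mul_assoc]
        _ = hInv θ * g θ * A := by rw [hADcT, Matrix.one_mul, hAdef]
    have h2 : A * Matrix.vecMulVec m m = 0 := by
      ext i β
      simp only [Matrix.mul_apply, Matrix.vecMulVec_apply, Matrix.zero_apply]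
      have : ∑ γ, A i γ * (m γ * m β) = (A *ᵥ m) i * m β := by
        simp [Matrix.mulVec, dotProduct, Finset.sum_mul, mul_assoc]
      rw [this, hAμ]
      simp
    rw [h1, h2, add_zero]
  have hAGInv : A * GInv θ = gInv θ * h θ * A := by
    have e1 : A * G θ * GInv θ = A := by
      rw [Matrix.mul_assoc, (hGInv θ).1, Matrix.mul_one]
    have e2 : A * G θ * GInv θ = hInv θ * g θ * (A * GInv θ) := by
      rw [hAG, Matrix.mul_assoc]
    have e3 : hInv θ * g θ * (A * GInv θ) = A := by rw [← e2, e1]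
    calc A * GInv θ
        = (gInv θ * h θ * (hInv θ * g θ)) * (A * GInv θ) := by
          rw [Matrix.mul_assoc (gInv θ) (h θ), ← Matrix.mul_assoc (h θ),
            (hhInv θ).1, Matrix.one_mul, (hgInv θ).2, Matrix.one_mul]
      _ = gInv θ * h θ * (hInv θ * g θ * (A * GInv θ)) := by
          simp only [Matrix.mul_assoc]
      _ = gInv θ * h θ * A := by rw [e3]
  have hkey : A * GInv θ * Aᵀ = gInv θ := by
    rw [hAGInv, Matrix.mul_assoc, hAAT, Matrix.mul_assoc, hhInvT, Matrix.mul_one]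
  -- express both sides as dot products
  have hL : (∑ β, ∑ γ, GInv θ β γ
        * (∑ i, ∑ j, hInv θ i j * pd F i θ * pd (fun t => c t β) j θ)
        * (∑ i, ∑ j, hInv θ i j * pd W i θ * pd (fun t => c t γ) j θ))
      = vF ⬝ᵥ ((A * GInv θ * Aᵀ) *ᵥ vW) := by
    have ha : ∀ β, (∑ i, ∑ j, hInv θ i j * pd F i θ * pd (fun t => c t β) j θ)
        = (vF ᵥ* A) β := by
      intro β
      simp only [Matrix.vecMul, dotProduct, hAdef, Matrix.mul_apply, hDcdef,
        Matrix.of_apply, Finset.mul_sum, hvFdef]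
      refine Finset.sum_congr rfl fun i _ => Finset.sum_congr rfl fun j _ => by ring
    have hb : ∀ γ, (∑ i, ∑ j, hInv θ i j * pd W i θ * pd (fun t => c t γ) j θ)
        = (Aᵀ *ᵥ vW) γ := by
      intro γ
      rw [Matrix.mulVec_transpose]
      simp only [Matrix.vecMul, dotProduct, hAdef, Matrix.mul_apply, hDcdef,
        Matrix.of_apply, Finset.mul_sum, hvWdef]
      refine Finset.sum_congr rfl fun i _ => Finset.sum_congr rfl fun j _ => by ring
    calc ∑ β, ∑ γ, GInv θ β γ
          * (∑ i, ∑ j, hInv θ i j * pd F i θ * pd (fun t => c t β) j θ)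
          * (∑ i, ∑ j, hInv θ i j * pd W i θ * pd (fun t => c t γ) j θ)
        = ∑ β, ∑ γ, (vF ᵥ* A) β * (GInv θ β γ * (Aᵀ *ᵥ vW) γ) := by
          refine Finset.sum_congr rfl fun β _ => Finset.sum_congr rfl fun γ _ => ?_
          rw [ha, hb]; ring
      _ = (vF ᵥ* A) ⬝ᵥ (GInv θ *ᵥ (Aᵀ *ᵥ vW)) := by
          simp [dotProduct, Matrix.mulVec, Finset.mul_sum]
      _ = vF ⬝ᵥ ((A * GInv θ * Aᵀ) *ᵥ vW) := by
          simp only [Matrix.dotProduct_mulVec, Matrix.vecMul_vecMul]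
  have hR : (∑ lam, (∑ i, ∑ j, gInv θ i j * pd F i θ * pd (fun t => X t lam) j θ)
          * (∑ i, ∑ j, gInv θ i j * pd W i θ * pd (fun t => X t lam) j θ))
      = vF ⬝ᵥ ((gInv θ * DX * (gInv θ * DX)ᵀ) *ᵥ vW) := by
    set B : Matrix (Fin n) (Fin (n + 1)) ℝ := gInv θ * DX with hBdef
    have ha : ∀ lam, (∑ i, ∑ j, gInv θ i j * pd F i θ * pd (fun t => X t lam) j θ)
        = (vF ᵥ* B) lam := by
      intro lam
      simp only [Matrix.vecMul, dotProduct, hBdef, Matrix.mul_apply, hDXdef,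
        Matrix.of_apply, Finset.mul_sum, hvFdef]
      refine Finset.sum_congr rfl fun i _ => Finset.sum_congr rfl fun j _ => by ring
    have hb : ∀ lam, (∑ i, ∑ j, gInv θ i j * pd W i θ * pd (fun t => X t lam) j θ)
        = (Bᵀ *ᵥ vW) lam := by
      intro lam
      rw [Matrix.mulVec_transpose]
      simp only [Matrix.vecMul, dotProduct, hBdef, Matrix.mul_apply, hDXdef,
        Matrix.of_apply, Finset.mul_sum, hvWdef]
      refine Finset.sum_congr rfl fun i _ => Finset.sum_congr rfl fun j _ => by ring
    calc ∑ lam, (∑ i, ∑ j, gInv θ i j * pd F i θ * pd (fun t => X t lam) j θ)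
          * (∑ i, ∑ j, gInv θ i j * pd W i θ * pd (fun t => X t lam) j θ)
        = (vF ᵥ* B) ⬝ᵥ (Bᵀ *ᵥ vW) := by
          refine Finset.sum_congr rfl fun lam _ => ?_
          rw [ha, hb]
      _ = vF ⬝ᵥ ((B * Bᵀ) *ᵥ vW) := by
          simp only [Matrix.dotProduct_mulVec, Matrix.vecMul_vecMul]
  rw [hL, hR, hkey]
  congr 1
  rw [Matrix.transpose_mul, ← Matrix.mul_assoc, Matrix.mul_assoc (gInv θ), ← hmat_g,
    Matrix.mul_assoc, hgInvT, Matrix.mul_one]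
end
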